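/- Let m ≥ 4 and n = 2^m, and let the deletion probability be q = 1/2. If x and y are two distinct codewords of RM(m,1) that agree in their first bit (x_1 = y_1), then |E[R_x] − E[R_y]| ≥ 0.028, where E[R_x] denotes the expected total number of runs in a trace of x through the i.i.d. deletion channel with deletion probability 1/2. -/

import Mathlib

open Finset

/-- Number of deletions in a deletion pattern (number of `1`s in `ω`). -/
def wt {n : ℕ} (ω : Fin n → Bool) : ℕ := (univ.filter fun j => ω j = true).card

/-- Trace of `x` under deletion pattern `ω`: the subsequence of bits `x j`
at the positions `j` with `ω j = 0`, in increasing order of position. -/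
def trc {n : ℕ} (x ω : Fin n → Bool) : List Bool :=
  ((List.finRange n).filter fun j => ω j = false).map x

/-- Total number of runs (maximal blocks of equal bits) in a binary list. -/
def numRuns (l : List Bool) : ℕ := (l.destutter (· ≠ ·)).length

/-- Number of runs of `0`s in a binary list. -/
def numZeroRuns (l : List Bool) : ℕ := (l.destutter (· ≠ ·)).count false

/-- Number of runs of `1`s in a binary list. -/
def numOneRuns (l : List Bool) : ℕ := (l.destutter (· ≠ ·)).count true

/-- The first-order Reed-Muller code `RM(m,1)`: evaluation vectors of affine
Boolean polynomials `u₀ + u₁x₁ + ⋯ + u_mx_m`, coordinates indexed by the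
`2^m` evaluation points in lexicographic order. -/
def RM1 (m : ℕ) : Set (Fin (2 ^ m) → Bool) :=
  { x | ∃ (u0 : Bool) (u : Fin m → Bool), ∀ t : Fin (2 ^ m),
      x t = (u0 ^^ decide ((univ.filter fun i : Fin m =>
        u i = true ∧ (t : ℕ).testBit (i : ℕ) = true).card % 2 = 1)) }

/-!
With deletion probability `1/2` all deletion patterns are equally likely, so expectations are
averages over patterns, and the relevant counts obey exact recursions under concatenation: the
runs of a trace of `s ++ t` are those of the two halves, less one when the last bit kept from `s`
equals the first bit kept from `t`. The first `2^(k+1)` bits of an `RM(m,1)` codeword are its first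
`2^k` bits followed by their copy or their complement, according to the coefficient `u_k`. Hence the
normalised expected number of runs `E_k` of that prefix satisfies
`E_{k+1} = 2 E_k - (1 - ε_k)^2 / 2 - σ_k ρ_k / 8`, where `ε_k = 2^(-2^k)`, `σ_k = ±1` is the sign of
`u_k` and `ρ_k = ∏_{j<k} σ_j (1 + σ_j ε_j)^2`; here `σ_k ρ_k` comes from the product of the biases
of the first and of the last bit of a trace, which each doubling multiplies by
`σ_k (2^(2^k) + σ_k)^2`. Solving, `E[R_x] = 2^m (c_m - S(σ) / 16)` with `c_m`
independent of the codeword and `S(σ) = ∑_{k<m} 2^(-k) σ_k ρ_k` (evaluated in Horner form).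
Equal first bits force equal `u_0`, so distinct codewords have distinct sign sequences;
expanding `S` up to the first index where they differ gives
`|S(σ) - S(σ')| ≥ 2^(2-m) ∏_{j<m} (1 - ε_j)^2`, and the product exceeds `(45/128)(127/128)`.
-/

lemma numRuns_cons (a : Bool) (s : List Bool) :
    numRuns (a :: s) + (if s.head? = some a then 1 else 0) = numRuns s + 1 := by
  cases s with
  | nil => simp [numRuns]
  | cons c t =>
    by_cases h : a = c
    · subst h
      simp [numRuns, List.destutter_cons']
    · simp [numRuns, List.destutter_cons', h, Ne.symm h]

lemma trc_cons_true {n : ℕ} (x : Fin (n + 1) → Bool) (ω : Fin n → Bool) :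
    trc x (Fin.cons true ω) = trc (fun i => x i.succ) ω := by
  simp [trc, List.finRange_succ, List.filter_map, Function.comp_def]

lemma trc_cons_false {n : ℕ} (x : Fin (n + 1) → Bool) (ω : Fin n → Bool) :
    trc x (Fin.cons false ω) = x 0 :: trc (fun i => x i.succ) ω := by
  simp [trc, List.finRange_succ, List.filter_map, Function.comp_def]

lemma sum_boolFun_succ {M : Type*} [AddCommMonoid M] {n : ℕ} (F : (Fin (n + 1) → Bool) → M) :
    ∑ ω, F ω = ∑ ω : Fin n → Bool, (F (Fin.cons true ω) + F (Fin.cons false ω)) := by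
  rw [← (Fin.consEquiv fun _ => Bool).sum_comp, Fintype.sum_prod_type, Fintype.sum_bool,
    ← Finset.sum_add_distrib]
  rfl

/-- Summed over all deletion patterns of `l`: `traceHeadCount b l` and `traceLastCount b l` count
the traces that start, resp. end, with `b`, and `traceRunsCount l` adds up their numbers of runs. -/
noncomputable def traceHeadCount (b : Bool) : List Bool → ℝ
  | [] => 0
  | a :: t => traceHeadCount b t + if a = b then 2 ^ t.length else 0

noncomputable def traceLastCount (b : Bool) : List Bool → ℝ
  | [] => 0
  | a :: t => 2 * traceLastCount b t + if a = b then 1 else 0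

noncomputable def traceRunsCount : List Bool → ℝ
  | [] => 0
  | a :: t => 2 * traceRunsCount t + 2 ^ t.length - traceHeadCount a t

lemma sum_trc_head {n : ℕ} (x : Fin n → Bool) (b : Bool) :
    ∑ ω, (if (trc x ω).head? = some b then (1 : ℝ) else 0) = traceHeadCount b (List.ofFn x) := by
  induction n with
  | zero => simp [trc, traceHeadCount]
  | succ n ih =>
    simp only [sum_boolFun_succ, trc_cons_true, trc_cons_false, List.head?_cons,
      Option.some.injEq, sum_add_distrib, ih, List.ofFn_succ, traceHeadCount, List.length_ofFn]
    split_ifs <;> simp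

lemma sum_numRuns_trc {n : ℕ} (x : Fin n → Bool) :
    ∑ ω, (numRuns (trc x ω) : ℝ) = traceRunsCount (List.ofFn x) := by
  induction n with
  | zero => simp [trc, traceRunsCount, numRuns]
  | succ n ih =>
    have hcons (ω : Fin n → Bool) : (numRuns (x 0 :: trc (fun i => x i.succ) ω) : ℝ) =
        numRuns (trc (fun i => x i.succ) ω) + 1
          - if (trc (fun i => x i.succ) ω).head? = some (x 0) then 1 else 0 := by
      rw [eq_sub_iff_add_eq]
      exact_mod_cast numRuns_cons _ _
    simp only [sum_boolFun_succ, trc_cons_true, trc_cons_false, hcons, sum_add_distrib,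
      sum_sub_distrib, ih, sum_trc_head, List.ofFn_succ, traceRunsCount, List.length_ofFn,
      sum_const, card_univ, Fintype.card_pi, Fintype.card_bool, prod_const, Fintype.card_fin,
      nsmul_eq_mul, Nat.cast_pow, Nat.cast_ofNat, mul_one]
    ring

section Append

variable (b c : Bool) (s t l : List Bool)

lemma traceHeadCount_append :
    traceHeadCount b (s ++ t) = 2 ^ t.length * traceHeadCount b s + traceHeadCount b t := by
  induction s with
  | nil => simp [traceHeadCount]
  | cons a s ih =>
    simp only [List.cons_append, traceHeadCount, ih, List.length_append, pow_add]
    split_ifs <;> ring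

lemma traceLastCount_append :
    traceLastCount b (s ++ t) = 2 ^ s.length * traceLastCount b t + traceLastCount b s := by
  induction s with
  | nil => simp [traceLastCount]
  | cons a s ih =>
    simp only [List.cons_append, traceLastCount, ih, List.length_cons, pow_succ]
    ring

lemma traceRunsCount_append :
    traceRunsCount (s ++ t) = 2 ^ t.length * traceRunsCount s + 2 ^ s.length * traceRunsCount t
      - (traceLastCount true s * traceHeadCount true t
        + traceLastCount false s * traceHeadCount false t) := by
  induction s with
  | nil => simp [traceRunsCount, traceLastCount]
  | cons a s ih =>
    simp only [List.cons_append, traceRunsCount, ih, traceHeadCount_append, traceLastCount,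
      List.length_append, List.length_cons, pow_add, pow_succ]
    cases a <;> simp only [Bool.false_eq_true, Bool.true_eq_false, ↓reduceIte, add_zero] <;> ring

lemma traceHeadCount_map_xor :
    traceHeadCount b (l.map (xor c)) = traceHeadCount (xor b c) l := by
  induction l with
  | nil => rfl
  | cons a l ih =>
    simp only [List.map_cons, traceHeadCount, ih, List.length_map]
    cases a <;> cases b <;> cases c <;> rfl

lemma traceLastCount_map_xor :
    traceLastCount b (l.map (xor c)) = traceLastCount (xor b c) l := by
  induction l with
  | nil => rfl
  | cons a l ih =>
    simp only [List.map_cons, traceLastCount, ih]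
    cases a <;> cases b <;> cases c <;> rfl

lemma traceRunsCount_map_xor : traceRunsCount (l.map (xor c)) = traceRunsCount l := by
  induction l with
  | nil => rfl
  | cons a l ih =>
    simp only [List.map_cons, traceRunsCount, ih, List.length_map, traceHeadCount_map_xor]
    cases a <;> cases c <;> rfl

lemma traceHeadCount_true_add_false :
    traceHeadCount true l + traceHeadCount false l = 2 ^ l.length - 1 := by
  induction l with
  | nil => simp [traceHeadCount]
  | cons a l ih =>
    simp only [traceHeadCount, List.length_cons, pow_succ]
    cases a <;> simp only [Bool.false_eq_true, Bool.true_eq_false, ↓reduceIte, add_zero] <;> linarith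

lemma traceLastCount_true_add_false :
    traceLastCount true l + traceLastCount false l = 2 ^ l.length - 1 := by
  induction l with
  | nil => simp [traceLastCount]
  | cons a l ih =>
    simp only [traceLastCount, List.length_cons, pow_succ]
    cases a <;> simp only [Bool.false_eq_true, Bool.true_eq_false, ↓reduceIte, add_zero] <;> linarith

end Append

def boolSign (c : Bool) : ℝ := if c then -1 else 1

noncomputable def headBias (l : List Bool) : ℝ := traceHeadCount true l - traceHeadCount false l

noncomputable def lastBias (l : List Bool) : ℝ := traceLastCount true l - traceLastCount false l

section Doubling

variable (c : Bool) (l : List Bool)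

lemma headBias_append_map_xor :
    headBias (l ++ l.map (xor c)) = (2 ^ l.length + boolSign c) * headBias l := by
  simp only [headBias, traceHeadCount_append, traceHeadCount_map_xor, List.length_map]
  cases c <;> simp only [bne_self_eq_false, Bool.bne_false, Bool.bne_true, Bool.not_false, boolSign,
    Bool.false_eq_true, ↓reduceIte] <;> ring

lemma lastBias_append_map_xor :
    lastBias (l ++ l.map (xor c)) = (boolSign c * 2 ^ l.length + 1) * lastBias l := by
  simp only [lastBias, traceLastCount_append, traceLastCount_map_xor]
  cases c <;> simp only [bne_self_eq_false, Bool.bne_false, Bool.bne_true, Bool.not_false, boolSign,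
    Bool.false_eq_true, ↓reduceIte] <;> ring

lemma traceRunsCount_append_map_xor :
    traceRunsCount (l ++ l.map (xor c)) = 2 * 2 ^ l.length * traceRunsCount l
      - ((2 ^ l.length - 1) ^ 2 + boolSign c * (lastBias l * headBias l)) / 2 := by
  have hhead := traceHeadCount_true_add_false l
  have hlast := traceLastCount_true_add_false l
  simp only [traceRunsCount_append, traceRunsCount_map_xor, traceHeadCount_map_xor,
    List.length_map, lastBias, headBias]
  cases c <;> simp only [bne_self_eq_false, Bool.bne_false, Bool.bne_true, Bool.not_false, boolSign,
    Bool.false_eq_true, ↓reduceIte] <;>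
    linear_combination (-(1 : ℝ) / 2) * ((traceLastCount true l + traceLastCount false l) * hhead
      + (2 ^ l.length - 1) * hlast)

end Doubling

section ReedMuller

variable {m : ℕ} (u0 : Bool) (u : Fin m → Bool)

def rmBit (t : ℕ) : Bool :=
  u0 ^^ decide ((univ.filter fun i : Fin m => u i = true ∧ t.testBit i = true).card % 2 = 1)

def rmWord (k : ℕ) : List Bool := (List.range (2 ^ k)).map (rmBit u0 u)

lemma rmBit_zero : rmBit u0 u 0 = u0 := by
  simp [rmBit]

lemma rmBit_two_pow_add {k : ℕ} (hk : k < m) {t : ℕ} (ht : t < 2 ^ k) :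
    rmBit u0 u (2 ^ k + t) = (u ⟨k, hk⟩ ^^ rmBit u0 u t) := by
  have hbit (i : ℕ) : (2 ^ k + t).testBit i = (decide (k = i) || t.testBit i) := by
    rw [← Nat.testBit_two_pow, ← Nat.testBit_or]
    simpa using congrArg (Nat.testBit · i) (Nat.two_pow_add_eq_or_of_lt ht 1)
  have hcard : (univ.filter fun i : Fin m => u i = true ∧ (2 ^ k + t).testBit i = true).card
      = (univ.filter fun i : Fin m => u i = true ∧ t.testBit i = true).card
        + if u ⟨k, hk⟩ = true then 1 else 0 := by
    simp only [card_filter, ← Fintype.sum_ite_eq' (⟨k, hk⟩ : Fin m) fun i => if u i then 1 else 0,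
      ← sum_add_distrib]
    refine sum_congr rfl fun i _ => ?_
    rcases eq_or_ne i ⟨k, hk⟩ with rfl | hi
    · simp [hbit, Nat.testBit_lt_two_pow ht]
    · have hi' : k ≠ i := fun h => hi (Fin.ext h.symm)
      simp [hbit, hi', hi]
  unfold rmBit
  rw [hcard]
  rcases Nat.mod_two_eq_zero_or_one
      (univ.filter fun i : Fin m => u i = true ∧ t.testBit i = true).card with h | h <;>
    cases u ⟨k, hk⟩ <;> simp [Nat.add_mod, h]

variable {u0 u}

lemma length_rmWord (k : ℕ) : (rmWord u0 u k).length = 2 ^ k := by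
  simp [rmWord]

lemma rmWord_zero : rmWord u0 u 0 = [u0] := by
  simp [rmWord, rmBit_zero]

lemma rmWord_succ {k : ℕ} (hk : k < m) :
    rmWord u0 u (k + 1) = rmWord u0 u k ++ (rmWord u0 u k).map (xor (u ⟨k, hk⟩)) := by
  rw [rmWord, pow_succ, mul_two, List.range_add, List.map_append, List.map_map, rmWord,
    List.map_map]
  congr 1
  exact List.map_congr_left fun t ht => rmBit_two_pow_add u0 u hk (List.mem_range.mp ht)

lemma ofFn_eq_rmWord {x : Fin (2 ^ m) → Bool} (hx : ∀ t : Fin (2 ^ m), x t = rmBit u0 u t) :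
    List.ofFn x = rmWord u0 u m :=
  List.ext_getElem (by simp [rmWord]) fun t _ ht => by simp [rmWord, hx]

end ReedMuller

noncomputable def eps (k : ℕ) : ℝ := ((2 : ℝ) ^ 2 ^ k)⁻¹

def rmSign {m : ℕ} (u : Fin m → Bool) (k : ℕ) : ℝ :=
  if h : k < m then boolSign (u ⟨k, h⟩) else 1

noncomputable def signProd (r L : ℕ) (σ : ℕ → ℝ) : ℝ :=
  ∏ j ∈ range L, σ (r + j) * (1 + σ (r + j) * eps (r + j)) ^ 2

noncomputable def runSeries : ℕ → ℕ → (ℕ → ℝ) → ℝ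
  | _, 0, _ => 0
  | r, L + 1, σ => σ r * (1 + (1 + σ r * eps r) ^ 2 * runSeries (r + 1) L σ / 2)

lemma runSeries_succ_eq_add (L : ℕ) : ∀ (r : ℕ) (σ : ℕ → ℝ),
    runSeries r (L + 1) σ = runSeries r L σ + (1 / 2) ^ L * σ (r + L) * signProd r L σ := by
  induction L with
  | zero => intro r σ; simp [runSeries, signProd]
  | succ L ih =>
    intro r σ
    rw [runSeries, ih, runSeries, signProd, signProd, prod_range_succ']
    simp only [add_zero, show ∀ j, r + 1 + j = r + (j + 1) by intro j; ring]
    ring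

lemma two_pow_two_pow_succ (k : ℕ) : (2 : ℝ) ^ 2 ^ (k + 1) = ((2 : ℝ) ^ 2 ^ k) ^ 2 := by
  rw [pow_succ, pow_mul]

lemma boolSign_sq (c : Bool) : boolSign c ^ 2 = 1 := by
  cases c <;> norm_num [boolSign]

section Codeword

variable {m : ℕ} {u0 : Bool} {u : Fin m → Bool}

lemma rmSign_of_lt {k : ℕ} (hk : k < m) : rmSign u k = boolSign (u ⟨k, hk⟩) := dif_pos hk

lemma lastBias_mul_headBias_rmWord {k : ℕ} (hk : k ≤ m) :
    lastBias (rmWord u0 u k) * headBias (rmWord u0 u k)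
      = ((2 : ℝ) ^ 2 ^ k) ^ 2 / 4 * signProd 0 k (rmSign u) := by
  induction k with
  | zero => cases u0 <;> norm_num [rmWord_zero, lastBias, headBias, signProd, traceLastCount,
      traceHeadCount]
  | succ k ih =>
    have hk' : k < m := by omega
    set N : ℝ := (2 : ℝ) ^ 2 ^ k
    set s := boolSign (u ⟨k, hk'⟩)
    have hN : N ≠ 0 := by positivity
    have hs : s ^ 2 = 1 := boolSign_sq _
    rw [rmWord_succ hk', lastBias_append_map_xor, headBias_append_map_xor, length_rmWord,
      two_pow_two_pow_succ, signProd, prod_range_succ, ← signProd, zero_add, rmSign_of_lt hk',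
      eps]
    calc (s * N + 1) * lastBias (rmWord u0 u k) * ((N + s) * headBias (rmWord u0 u k))
        = (s * N + 1) * (N + s) * (N ^ 2 / 4 * signProd 0 k (rmSign u)) := by
          rw [← ih hk'.le]; ring
      _ = (N ^ 2) ^ 2 / 4 * (signProd 0 k (rmSign u) * (s * (1 + s * N⁻¹) ^ 2)) := by
          have hsq : N ^ 2 * (1 + s * N⁻¹) ^ 2 = (N + s) ^ 2 := by field_simp
          linear_combination (N ^ 2 / 4 * signProd 0 k (rmSign u)) * ((-s) * hsq - (N + s) * hs)

lemma traceRunsCount_rmWord {k : ℕ} (hk : k ≤ m) :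
    traceRunsCount (rmWord u0 u k) / 2 ^ 2 ^ k
      = 2 ^ k * (1 / 2 - ∑ j ∈ range k, (1 / 2) ^ (j + 2) * (1 - eps j) ^ 2
        - runSeries 0 k (rmSign u) / 16) := by
  induction k with
  | zero => simp [rmWord_zero, traceRunsCount, traceHeadCount, runSeries]
  | succ k ih =>
    have hk' : k < m := by omega
    have hP := lastBias_mul_headBias_rmWord (u0 := u0) (u := u) hk'.le
    have ih' := ih hk'.le
    rw [rmWord_succ hk', traceRunsCount_append_map_xor, length_rmWord, two_pow_two_pow_succ,
      runSeries_succ_eq_add, sum_range_succ, zero_add, ← rmSign_of_lt hk', eps, hP]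
    rw [div_eq_iff (by positivity)] at ih'
    rw [ih', one_div, inv_pow, inv_pow]
    field_simp
    ring

end Codeword

lemma eps_pos (k : ℕ) : 0 < eps k := by unfold eps; positivity

lemma eps_succ (k : ℕ) : eps (k + 1) = eps k ^ 2 := by
  rw [eps, eps, two_pow_two_pow_succ, inv_pow]

lemma eps_le_half_pow {k n : ℕ} (h : n ≤ 2 ^ k) : eps k ≤ (1 / 2) ^ n := by
  rw [eps, one_div, inv_pow]
  exact inv_anti₀ (by positivity) (pow_le_pow_right₀ (by norm_num) h)

lemma eps_le_half (k : ℕ) : eps k ≤ 1 / 2 := by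
  simpa using eps_le_half_pow (k := k) (n := 1) Nat.one_le_two_pow

lemma eps_le_quarter {k : ℕ} (hk : 1 ≤ k) : eps k ≤ 1 / 4 := by
  have h : 2 ^ 1 ≤ 2 ^ k := Nat.pow_le_pow_right (by norm_num) hk
  linarith [eps_le_half_pow h]

def IsSign (σ : ℕ → ℝ) : Prop := ∀ n, σ n = 1 ∨ σ n = -1

lemma isSign_rmSign {m : ℕ} (u : Fin m → Bool) : IsSign (rmSign u) := by
  intro n
  unfold rmSign boolSign
  split_ifs <;> simp

lemma runSeries_one_nonneg (L : ℕ) : ∀ r, 0 ≤ runSeries r L 1 := by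
  induction L with
  | zero => intro r; rfl
  | succ L ih => intro r; simp only [runSeries, Pi.one_apply, one_mul]; positivity [ih (r + 1)]

lemma runSeries_one_le (L : ℕ) : ∀ r, runSeries r L 1 ≤ 2 / (1 - eps r) - 2 * (1 / 2) ^ L := by
  induction L with
  | zero =>
    intro r
    have := eps_le_half r
    rw [runSeries, pow_zero, mul_one, le_sub_iff_add_le, zero_add,
      le_div_iff₀ (by linarith)]
    linarith [eps_pos r]
  | succ L ih =>
    intro r
    have hε := eps_le_half r
    have hε0 := eps_pos r
    calc runSeries r (L + 1) 1
        ≤ 1 + (1 + eps r) ^ 2 * (2 / (1 - eps (r + 1)) - 2 * (1 / 2) ^ L) / 2 := by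
          simp only [runSeries, Pi.one_apply, one_mul]
          gcongr
          exact ih (r + 1)
      _ = 2 / (1 - eps r) - (1 + eps r) ^ 2 * (1 / 2) ^ L := by
          have h1 : 1 - eps r ≠ 0 := by linarith
          have h2 : 1 + eps r ≠ 0 := by linarith
          rw [eps_succ, show 1 - eps r ^ 2 = (1 - eps r) * (1 + eps r) by ring]
          field_simp
          ring
      _ ≤ 2 / (1 - eps r) - 2 * (1 / 2) ^ (L + 1) := by
          have : 1 ≤ (1 + eps r) ^ 2 := by nlinarith
          have := mul_le_mul_of_nonneg_right this (pow_nonneg (by norm_num : (0 : ℝ) ≤ 1 / 2) L)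
          rw [pow_succ (1 / 2 : ℝ) L]
          linarith

lemma abs_runSeries_le {σ : ℕ → ℝ} (hσ : IsSign σ) (L : ℕ) :
    ∀ r, |runSeries r L σ| ≤ runSeries r L 1 := by
  induction L with
  | zero => intro r; simp [runSeries]
  | succ L ih =>
    intro r
    have hε := eps_pos r
    have hsq : (1 + σ r * eps r) ^ 2 ≤ (1 + eps r) ^ 2 := by
      rcases hσ r with h | h <;> rw [h] <;> nlinarith
    have habs : |σ r| = 1 := by rcases hσ r with h | h <;> simp [h]
    simp only [runSeries, Pi.one_apply, one_mul, abs_mul, habs]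
    calc |1 + (1 + σ r * eps r) ^ 2 * runSeries (r + 1) L σ / 2|
        ≤ 1 + (1 + σ r * eps r) ^ 2 * |runSeries (r + 1) L σ| / 2 := by
          refine (abs_add_le _ _).trans ?_
          rw [abs_one, abs_div, abs_mul, abs_of_nonneg (sq_nonneg _), abs_two]
      _ ≤ 1 + (1 + eps r) ^ 2 * runSeries (r + 1) L 1 / 2 := by
          gcongr
          exact ih (r + 1)

section Gap

variable {σ σ' : ℕ → ℝ}

lemma neg_le_runSeries_succ (hσ : IsSign σ) {r : ℕ} (hr : 1 ≤ r) (L : ℕ) :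
    -(1 + (1 - eps r) ^ 2 * runSeries (r + 1) L 1 / 2) ≤ runSeries r (L + 1) σ := by
  set ε := eps r
  set M := runSeries (r + 1) L 1
  have hε0 : 0 < ε := eps_pos r
  have hε : ε ≤ 1 / 4 := eps_le_quarter hr
  have hM0 : 0 ≤ M := runSeries_one_nonneg L (r + 1)
  have hG := abs_le.mp (abs_runSeries_le hσ L (r + 1))
  -- for `σ r = 1` the bound amounts to `((1 + ε) ^ 2 - (1 - ε) ^ 2) * M / 2 ≤ 2`
  have hεM : ε * M ≤ 1 := by
    have hM : M ≤ 2 / (1 - ε ^ 2) := by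
      have := runSeries_one_le L (r + 1)
      rw [eps_succ] at this
      linarith [pow_pos (by norm_num : (0 : ℝ) < 1 / 2) L]
    rw [le_div_iff₀ (by nlinarith)] at hM
    nlinarith
  rcases hσ r with h | h <;> simp only [runSeries, h] <;> nlinarith

lemma le_runSeries_sub_of_sign_ne (hσ : IsSign σ) (hσ' : IsSign σ') {r : ℕ} (h : σ r = 1)
    (h' : σ' r = -1) (L : ℕ) :
    (1 - eps (r + 1)) ^ 2 * (1 / 2) ^ L ≤ runSeries r (L + 2) σ - runSeries r (L + 2) σ' := by
  set ε := eps r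
  set q : ℝ := (1 / 2) ^ L
  set B := 1 + (1 - eps (r + 1)) ^ 2 * runSeries (r + 1 + 1) L 1 / 2
  have hε0 : 0 < ε := eps_pos r
  have hε : ε ≤ 1 / 2 := eps_le_half r
  have hε' : eps (r + 1) = ε ^ 2 := eps_succ r
  have hB : (1 + ε ^ 2) * B ≤ 2 - (1 + ε ^ 2) * (1 - ε ^ 2) ^ 2 * q := by
    have hM := runSeries_one_le L (r + 1 + 1)
    rw [eps_succ, hε'] at hM
    have h1 : 1 - ε ^ 2 ≠ 0 := by nlinarith
    have h2 : 1 + ε ^ 2 ≠ 0 := by positivity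
    calc (1 + ε ^ 2) * B
        ≤ (1 + ε ^ 2) * (1 + (1 - ε ^ 2) ^ 2 * (2 / (1 - (ε ^ 2) ^ 2) - 2 * q) / 2) := by
          simp only [B, hε']
          gcongr
      _ = 2 - (1 + ε ^ 2) * (1 - ε ^ 2) ^ 2 * q := by
          rw [show 1 - (ε ^ 2) ^ 2 = (1 - ε ^ 2) * (1 + ε ^ 2) by ring]
          field_simp
          ring
  set G := runSeries (r + 1) (L + 1) σ
  set G' := runSeries (r + 1) (L + 1) σ'
  have hG : -B ≤ G := neg_le_runSeries_succ hσ (by omega) L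
  have hG' : -B ≤ G' := neg_le_runSeries_succ hσ' (by omega) L
  -- both tails are at least `-B`, and `(1 + ε) ^ 2 + (1 - ε) ^ 2 = 2 * (1 + ε ^ 2)`
  have e := mul_le_mul_of_nonneg_left hG (sq_nonneg (1 + ε))
  have e' := mul_le_mul_of_nonneg_left hG' (sq_nonneg (1 - ε))
  have hq : 0 ≤ q := by positivity
  show (1 - eps (r + 1)) ^ 2 * q ≤ σ r * (1 + (1 + σ r * ε) ^ 2 * G / 2)
    - σ' r * (1 + (1 + σ' r * ε) ^ 2 * G' / 2)
  rw [h, h', hε']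
  linarith [mul_nonneg (mul_nonneg (sq_nonneg ε) (sq_nonneg (1 - ε ^ 2))) hq]

noncomputable def gapBound (r L : ℕ) : ℝ := 4 * ∏ j ∈ range L, (1 - eps (r + j)) ^ 2 / 2

lemma gapBound_succ (r L : ℕ) :
    gapBound r (L + 1) = (1 - eps r) ^ 2 / 2 * gapBound (r + 1) L := by
  simp only [gapBound, prod_range_succ', add_zero, add_assoc, add_comm 1]
  ring

lemma gapBound_nonneg (r L : ℕ) : 0 ≤ gapBound r L := by
  unfold gapBound
  positivity

lemma gapBound_le (r L : ℕ) : gapBound r L ≤ 4 * (1 / 2) ^ L := by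
  have hε (j : ℕ) : 0 < 1 - eps (r + j) ∧ 1 - eps (r + j) ≤ 1 :=
    ⟨by linarith [eps_le_half (r + j)], by linarith [eps_pos (r + j)]⟩
  unfold gapBound
  gcongr
  calc ∏ j ∈ range L, (1 - eps (r + j)) ^ 2 / 2
      ≤ ∏ _j ∈ range L, (1 / 2 : ℝ) :=
        prod_le_prod (fun j _ => by positivity [(hε j).1]) fun j _ => by
          nlinarith [(hε j).1, (hε j).2]
    _ = (1 / 2) ^ L := by simp

lemma abs_runSeries_succ_sub_of_eq (hσ : IsSign σ) {r : ℕ} (heq : σ r = σ' r) (L : ℕ) :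
    |runSeries r (L + 1) σ - runSeries r (L + 1) σ'|
      = (1 + σ r * eps r) ^ 2 / 2 * |runSeries (r + 1) L σ - runSeries (r + 1) L σ'| := by
  have habs : |σ r| = 1 := by rcases hσ r with h | h <;> simp [h]
  rw [runSeries, runSeries, ← heq, ← mul_sub, abs_mul, habs, one_mul,
    show ∀ a b c : ℝ, 1 + a * b / 2 - (1 + a * c / 2) = a / 2 * (b - c) by intros; ring,
    abs_mul, abs_div, abs_two, abs_of_nonneg (sq_nonneg _)]

lemma gapBound_le_runSeries_sub_of_sign_ne (hσ : IsSign σ) (hσ' : IsSign σ') {r : ℕ}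
    (h : σ r = 1) (h' : σ' r = -1) (L : ℕ) :
    gapBound r (L + 1) ≤ runSeries r (L + 1) σ - runSeries r (L + 1) σ' := by
  cases L with
  | zero =>
    have := eps_pos r
    have := eps_le_half r
    simp only [gapBound, runSeries, h, h', zero_add, prod_range_one, add_zero]
    nlinarith
  | succ L =>
    have h1 : (1 - eps r) ^ 2 ≤ 1 := by nlinarith [eps_pos r, eps_le_half r]
    have h2 := gapBound_le (r + 1 + 1) L
    refine le_trans ?_ (le_runSeries_sub_of_sign_ne hσ hσ' h h' L)
    rw [gapBound_succ, gapBound_succ]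
    calc (1 - eps r) ^ 2 / 2 * ((1 - eps (r + 1)) ^ 2 / 2 * gapBound (r + 1 + 1) L)
        ≤ 1 / 2 * ((1 - eps (r + 1)) ^ 2 / 2 * (4 * (1 / 2) ^ L)) := by
          have := gapBound_nonneg (r + 1 + 1) L
          gcongr
      _ = (1 - eps (r + 1)) ^ 2 * (1 / 2) ^ L := by ring

theorem gapBound_le_abs_runSeries_sub (hσ : IsSign σ) (hσ' : IsSign σ') (L : ℕ) :
    ∀ r, (∃ t < L, σ (r + t) ≠ σ' (r + t)) →
      gapBound r L ≤ |runSeries r L σ - runSeries r L σ'| := by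
  induction L with
  | zero => rintro r ⟨t, ht, -⟩; omega
  | succ L ih =>
    rintro r ⟨t, ht, hne⟩
    by_cases heq : σ r = σ' r
    · obtain ⟨t, rfl⟩ : ∃ t', t = t' + 1 :=
        Nat.exists_eq_add_one.mpr (Nat.pos_of_ne_zero (by rintro rfl; exact hne heq))
      have ih' := ih (r + 1) ⟨t, by omega, by rwa [add_right_comm, add_assoc]⟩
      have hsq : (1 - eps r) ^ 2 ≤ (1 + σ r * eps r) ^ 2 := by
        rcases hσ r with h | h <;> rw [h] <;> nlinarith [eps_pos r]
      have := gapBound_nonneg (r + 1) L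
      rw [abs_runSeries_succ_sub_of_eq hσ heq, gapBound_succ]
      gcongr
    · rcases hσ r with h | h <;> rcases hσ' r with h' | h'
      · exact absurd (h.trans h'.symm) heq
      · exact (gapBound_le_runSeries_sub_of_sign_ne hσ hσ' h h' L).trans (le_abs_self _)
      · rw [abs_sub_comm]
        exact (gapBound_le_runSeries_sub_of_sign_ne hσ' hσ h' h L).trans (le_abs_self _)
      · exact absurd (h.trans h'.symm) heq

end Gap

lemma one_sub_sum_le_prod_one_sub {ι : Type*} (s : Finset ι) {a : ι → ℝ}
    (h0 : ∀ i ∈ s, 0 ≤ a i) (h1 : ∀ i ∈ s, a i ≤ 1) : 1 - ∑ i ∈ s, a i ≤ ∏ i ∈ s, (1 - a i) := by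
  classical
  induction s using Finset.induction_on with
  | empty => simp
  | insert i s hi ih =>
    rw [sum_insert hi, prod_insert hi]
    have hai := h0 i (mem_insert_self i s)
    have hai' := h1 i (mem_insert_self i s)
    have hs : 0 ≤ ∑ j ∈ s, a j := sum_nonneg fun j hj => h0 j (mem_insert_of_mem hj)
    have ih' := ih (fun j hj => h0 j (mem_insert_of_mem hj)) fun j hj => h1 j (mem_insert_of_mem hj)
    nlinarith [mul_le_mul_of_nonneg_left ih' (sub_nonneg.mpr hai')]

lemma prod_one_sub_eps_ge {m : ℕ} (hm : 3 ≤ m) :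
    45 / 128 * (127 / 128) ≤ ∏ j ∈ range m, (1 - eps j) := by
  have hhead : ∏ j ∈ range 3, (1 - eps j) = 45 / 128 := by
    norm_num [prod_range_succ, eps]
  have htail : ∑ j ∈ Ico 3 m, eps j ≤ 1 / 128 := by
    calc ∑ j ∈ Ico 3 m, eps j
        ≤ ∑ i ∈ range (m - 3), (1 / 2) ^ 8 * (1 / 2 : ℝ) ^ i := by
          rw [sum_Ico_eq_sum_range]
          refine sum_le_sum fun i _ => (eps_le_half_pow ?_).trans_eq (pow_add _ 8 i)
          have := Nat.lt_two_pow_self (n := i)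
          rw [pow_add]
          omega
      _ ≤ (1 / 2) ^ 8 * 2 := by rw [← mul_sum]; gcongr; exact sum_geometric_two_le _
      _ = 1 / 128 := by norm_num
  have := one_sub_sum_le_prod_one_sub (Ico 3 m) (a := eps) (fun j _ => (eps_pos j).le)
    fun j _ => (eps_le_half j).trans (by norm_num)
  rw [← prod_range_mul_prod_Ico _ hm, hhead]
  gcongr
  linarith

lemma two_pow_mul_gapBound (r L : ℕ) :
    2 ^ L * gapBound r L = 4 * (∏ j ∈ range L, (1 - eps (r + j))) ^ 2 := by
  rw [gapBound, prod_div_distrib, prod_pow, prod_const, card_range]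
  field_simp

lemma le_two_pow_mul_gapBound {m : ℕ} (hm : 3 ≤ m) : (0.028 : ℝ) ≤ 2 ^ m * gapBound 0 m / 16 := by
  have := prod_one_sub_eps_ge hm
  calc (0.028 : ℝ)
      ≤ 4 * (45 / 128 * (127 / 128)) ^ 2 / 16 := by norm_num
    _ ≤ 2 ^ m * gapBound 0 m / 16 := by
        rw [two_pow_mul_gapBound]
        simp only [zero_add]
        gcongr

lemma sum_half_pow_mul_numRuns {n : ℕ} (x : Fin n → Bool) :
    ∑ ω, (1 / 2 : ℝ) ^ n * numRuns (trc x ω) = traceRunsCount (List.ofFn x) / 2 ^ n := by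
  rw [← mul_sum, sum_numRuns_trc, one_div, inv_pow, inv_mul_eq_div]

lemma sum_half_pow_mul_numRuns_of_rmBit {m : ℕ} {u0 : Bool} {u : Fin m → Bool}
    {x : Fin (2 ^ m) → Bool} (hx : ∀ t : Fin (2 ^ m), x t = rmBit u0 u t) :
    ∑ ω, (1 / 2 : ℝ) ^ 2 ^ m * numRuns (trc x ω)
      = 2 ^ m * (1 / 2 - ∑ j ∈ range m, (1 / 2) ^ (j + 2) * (1 - eps j) ^ 2
        - runSeries 0 m (rmSign u) / 16) := by
  rw [sum_half_pow_mul_numRuns, ofFn_eq_rmWord hx, traceRunsCount_rmWord le_rfl]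

lemma exists_rmSign_ne {m : ℕ} {u v : Fin m → Bool} (h : u ≠ v) :
    ∃ t < m, rmSign u (0 + t) ≠ rmSign v (0 + t) := by
  obtain ⟨i, hi⟩ := Function.ne_iff.mp h
  refine ⟨i, i.isLt, ?_⟩
  rw [zero_add, rmSign_of_lt i.isLt, rmSign_of_lt i.isLt]
  revert hi
  cases u i <;> cases v i <;> norm_num [boolSign]

/-- For deletion probability `q = 1/2`, the expected numbers of runs in traces of
two distinct `RM(m,1)` codewords sharing the same first bit differ by at least `0.028`. -/
theorem RM1_expected_runs_gap (m : ℕ) (hm : 4 ≤ m) (x y : Fin (2 ^ m) → Bool)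
    (hx : x ∈ RM1 m) (hy : y ∈ RM1 m) (hxy : x ≠ y)
    (hfirst : x ⟨0, by positivity⟩ = y ⟨0, by positivity⟩) :
    0.028 ≤ |(∑ ω : Fin (2 ^ m) → Bool, ((1:ℝ)/2) ^ (2 ^ m) * (numRuns (trc x ω) : ℝ))
      - ∑ ω : Fin (2 ^ m) → Bool, ((1:ℝ)/2) ^ (2 ^ m) * (numRuns (trc y ω) : ℝ)| := by
  obtain ⟨u0, u, hx⟩ : ∃ u0 u, ∀ t : Fin (2 ^ m), x t = rmBit u0 u t := hx
  obtain ⟨v0, v, hy⟩ : ∃ v0 v, ∀ t : Fin (2 ^ m), y t = rmBit v0 v t := hy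
  have huv : u ≠ v := by
    rintro rfl
    obtain rfl : u0 = v0 := by simpa [hx, hy, rmBit_zero] using hfirst
    exact hxy (funext fun t => (hx t).trans (hy t).symm)
  have hgap := gapBound_le_abs_runSeries_sub (isSign_rmSign u) (isSign_rmSign v) m 0
    (exists_rmSign_ne huv)
  rw [sum_half_pow_mul_numRuns_of_rmBit hx, sum_half_pow_mul_numRuns_of_rmBit hy]
  calc (0.028 : ℝ)
      ≤ 2 ^ m * gapBound 0 m / 16 := le_two_pow_mul_gapBound (by omega)
    _ ≤ 2 ^ m * |runSeries 0 m (rmSign u) - runSeries 0 m (rmSign v)| / 16 := by gcongr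
    _ = |2 ^ m / 16 * (runSeries 0 m (rmSign v) - runSeries 0 m (rmSign u))| := by
        rw [abs_mul, abs_of_pos (by positivity : (0 : ℝ) < 2 ^ m / 16),
          abs_sub_comm (runSeries 0 m (rmSign v))]
        ring
    _ = _ := by congr 1; ring
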